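/- Let E = E_c - E_e with E_c, E_e : ℝ^n → ℝ convex and differentiable, and suppose u, v ∈ ℝ^n satisfy the scheme (v - u)/τ = -∇E_c(v) + ∇E_e(u), τ > 0. Then the dissipation identity E(v) + (1/τ)‖v - u‖² + R = E(u) holds with remainder R = [E_c(u) - E_c(v) - ⟨∇E_c(v), u - v⟩] + [E_e(v) - E_e(u) - ⟨∇E_e(u), v - u⟩] ≥ 0. -/

import Mathlib

open RealInnerProductSpace

/-! Each bracket of the remainder is a Bregman divergence, nonnegative because a convex function
lies above its tangent planes. The scheme says `Ge u - Gc v = τ⁻¹ • (v - u)`, so the two inner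
products in the remainder add up to `τ⁻¹ * ‖v - u‖ ^ 2`, and the identity is a rearrangement. -/

theorem ConvexOn.add_fderiv_sub_le {E : Type*} [NormedAddCommGroup E] [NormedSpace ℝ E]
    {s : Set E} {f : E → ℝ} {f' : E →L[ℝ] ℝ} {x y : E} (hf : ConvexOn ℝ s f)
    (hx : x ∈ s) (hy : y ∈ s) (hf' : HasFDerivAt f f' x) :
    f x + f' (y - x) ≤ f y := by
  set L : ℝ →ᵃ[ℝ] E := AffineMap.lineMap x y
  have hline : ConvexOn ℝ (L ⁻¹' s) (f ∘ L) := hf.comp_affineMap L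
  have hderiv : HasDerivAt (f ∘ L) (f' (y - x)) 0 := by
    refine HasFDerivAt.comp_hasDerivAt (0 : ℝ) ?_ AffineMap.hasDerivAt_lineMap
    simpa [L] using hf'
  have hslope := hline.le_slope_of_hasDerivAt (x := 0) (y := 1) (by simpa [L] using hx)
    (by simpa [L] using hy) one_pos hderiv
  simp only [slope_def_field, Function.comp_apply, L, AffineMap.lineMap_apply_zero,
    AffineMap.lineMap_apply_one, sub_zero, div_one] at hslope
  linarith

theorem ConvexOn.add_inner_gradient_sub_le {E : Type*} [NormedAddCommGroup E]
    [InnerProductSpace ℝ E] [CompleteSpace E] {s : Set E} {f : E → ℝ} {G x y : E}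
    (hf : ConvexOn ℝ s f) (hx : x ∈ s) (hy : y ∈ s) (hG : HasGradientAt f G x) :
    f x + ⟪G, y - x⟫ ≤ f y :=
  hf.add_fderiv_sub_le hx hy hG.hasFDerivAt

theorem convex_splitting_dissipation_identity_general (n : ℕ)
    (Ec Ee : EuclideanSpace ℝ (Fin n) → ℝ)
    (Gc Ge : EuclideanSpace ℝ (Fin n) → EuclideanSpace ℝ (Fin n))
    (hEc : ConvexOn ℝ Set.univ Ec) (hEe : ConvexOn ℝ Set.univ Ee)
    (hGc : ∀ x, HasGradientAt Ec (Gc x) x)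
    (hGe : ∀ x, HasGradientAt Ee (Ge x) x)
    (u v : EuclideanSpace ℝ (Fin n)) (τ : ℝ)
    (hscheme : τ⁻¹ • (v - u) = -Gc v + Ge u) :
    0 ≤ (Ec u - Ec v - ⟪Gc v, u - v⟫) + (Ee v - Ee u - ⟪Ge u, v - u⟫) ∧
      (Ec v - Ee v) + τ⁻¹ * ‖v - u‖ ^ 2 +
        ((Ec u - Ec v - ⟪Gc v, u - v⟫) + (Ee v - Ee u - ⟪Ge u, v - u⟫)) =
      Ec u - Ee u := by
  have hc := hEc.add_inner_gradient_sub_le (Set.mem_univ v) (Set.mem_univ u) (hGc v)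
  have he := hEe.add_inner_gradient_sub_le (Set.mem_univ u) (Set.mem_univ v) (hGe u)
  have hcross : ⟪Gc v, u - v⟫ + ⟪Ge u, v - u⟫ = τ⁻¹ * ‖v - u‖ ^ 2 := by
    rw [← neg_sub v u, inner_neg_right, neg_add_eq_sub, ← inner_sub_left,
      show Ge u - Gc v = τ⁻¹ • (v - u) by rw [hscheme]; abel,
      real_inner_smul_left, real_inner_self_eq_norm_sq]
  exact ⟨by linarith, by linarith⟩

theorem convex_splitting_dissipation_identity (n : ℕ)
    (Ec Ee : EuclideanSpace ℝ (Fin n) → ℝ)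
    (Gc Ge : EuclideanSpace ℝ (Fin n) → EuclideanSpace ℝ (Fin n))
    (hEc : ConvexOn ℝ Set.univ Ec) (hEe : ConvexOn ℝ Set.univ Ee)
    (hGc : ∀ x, HasGradientAt Ec (Gc x) x)
    (hGe : ∀ x, HasGradientAt Ee (Ge x) x)
    (u v : EuclideanSpace ℝ (Fin n)) (τ : ℝ) (hτ : 0 < τ)
    (hscheme : τ⁻¹ • (v - u) = -Gc v + Ge u) :
    0 ≤ (Ec u - Ec v - ⟪Gc v, u - v⟫) + (Ee v - Ee u - ⟪Ge u, v - u⟫) ∧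
      (Ec v - Ee v) + τ⁻¹ * ‖v - u‖ ^ 2 +
        ((Ec u - Ec v - ⟪Gc v, u - v⟫) + (Ee v - Ee u - ⟪Ge u, v - u⟫)) =
      Ec u - Ee u :=
  convex_splitting_dissipation_identity_general n Ec Ee Gc Ge hEc hEe hGc hGe u v τ hscheme
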